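/- arXiv:2205.08446 — 7 statements merged into one kernel-verified Lean document; each statement's English description precedes it below -/
import Mathlib

section
/- Let F : R^d → R^d be monotone (⟨F(x) - F(y), x - y⟩ ≥ 0 for all x, y) and L-Lipschitz, and let γ > 0. Given points x^k, x^{k+1}, x̃^{k-1}, x̃^k in R^d satisfying x̃^k = x^k - γ F(x̃^{k-1}) and x^{k+1} = x^k - γ F(x̃^k), the following holds: ‖F(x^{k+1})‖² + 2‖F(x^{k+1}) - F(x̃^k)‖² ≤ ‖F(x^k)‖² + 2‖F(x^k) - F(x̃^{k-1})‖² + 3(L²γ² - 2/9)‖F(x̃^k) - F(x̃^{k-1})‖². -/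
/-! Write `a, b, c, e` for `F` at `x^{k+1}, x^k, x̃^k, x̃^{k-1}`. Since `x^{k+1} - x^k = -γ c`,
monotonicity gives `⟪a - b, c⟫ ≤ 0`, and since `x^{k+1} - x̃^k = γ (e - c)`, the Lipschitz bound
gives `‖a - c‖² ≤ L²γ² ‖c - e‖²`. The first turns `‖a‖² - ‖a - c‖² = 2⟪a, c⟫ - ‖c‖²` into
`2⟪b, c⟫ - ‖c‖²`, the second pays for three copies of `‖a - c‖²`, and what is left is the
identity `‖b‖² + 2‖b - e‖² - 2⟪b, c⟫ + ‖c‖² - ⅔‖c - e‖² = ⅓‖3b - 2e - c‖²`. -/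

open scoped RealInnerProductSpace

section PastExtragradient

variable {E : Type*} [NormedAddCommGroup E] [InnerProductSpace ℝ E]

theorem two_inner_sub_norm_sq_add_le (b c e : E) :
    2 * ⟪b, c⟫ - ‖c‖ ^ 2 + 2 / 3 * ‖c - e‖ ^ 2 ≤ ‖b‖ ^ 2 + 2 * ‖b - e‖ ^ 2 := by
  have hsq : ‖(3 : ℝ) • b - (2 : ℝ) • e - c‖ ^ 2
      = 9 * ‖b‖ ^ 2 + 4 * ‖e‖ ^ 2 + ‖c‖ ^ 2 - 12 * ⟪b, e⟫ - 6 * ⟪b, c⟫ + 4 * ⟪e, c⟫ := by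
    simp only [← real_inner_self_eq_norm_sq, inner_sub_left, inner_sub_right,
      real_inner_smul_left, real_inner_smul_right, real_inner_comm b e, real_inner_comm b c,
      real_inner_comm e c]
    ring
  have hbe := norm_sub_sq_real b e
  have hce := norm_sub_sq_real c e
  rw [real_inner_comm e c] at hce
  linarith [sq_nonneg ‖(3 : ℝ) • b - (2 : ℝ) • e - c‖]

theorem norm_sq_add_two_mul_norm_sub_sq_le {a b c e : E} {K : ℝ}
    (hmono : ⟪a - b, c⟫ ≤ 0) (hLip : ‖a - c‖ ^ 2 ≤ K * ‖c - e‖ ^ 2) :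
    ‖a‖ ^ 2 + 2 * ‖a - c‖ ^ 2 ≤
      ‖b‖ ^ 2 + 2 * ‖b - e‖ ^ 2 + 3 * (K - 2 / 9) * ‖c - e‖ ^ 2 := by
  have hac := norm_sub_sq_real a c
  rw [inner_sub_left] at hmono
  linarith [two_inner_sub_norm_sq_add_le b c e]

theorem real_inner_nonpos_of_nonneg_inner_neg_smul {u v : E} {γ : ℝ} (hγ : 0 < γ)
    (h : 0 ≤ ⟪u, -(γ • v)⟫) : ⟪u, v⟫ ≤ 0 := by
  rw [inner_neg_right, real_inner_smul_right, neg_nonneg] at h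
  exact nonpos_of_mul_nonpos_right h hγ

end PastExtragradient

theorem peg_key_lemma (d : ℕ) (F : EuclideanSpace ℝ (Fin d) → EuclideanSpace ℝ (Fin d))
    (L γ : ℝ)
    (hmono : ∀ x y, 0 ≤ ⟪F x - F y, x - y⟫)
    (hLip : ∀ x y, ‖F x - F y‖ ≤ L * ‖x - y‖)
    (hγ : 0 < γ)
    (xk xk1 xtm xt : EuclideanSpace ℝ (Fin d))
    (hxt : xt = xk - γ • F xtm)
    (hxk1 : xk1 = xk - γ • F xt) :
    ‖F xk1‖ ^ 2 + 2 * ‖F xk1 - F xt‖ ^ 2 ≤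
      ‖F xk‖ ^ 2 + 2 * ‖F xk - F xtm‖ ^ 2 +
        3 * (L ^ 2 * γ ^ 2 - 2 / 9) * ‖F xt - F xtm‖ ^ 2 := by
  apply norm_sq_add_two_mul_norm_sub_sq_le
  · have hstep : xk1 - xk = -(γ • F xt) := by rw [hxk1, sub_sub_cancel_left]
    exact real_inner_nonpos_of_nonneg_inner_neg_smul hγ (hstep ▸ hmono xk1 xk)
  · have hstep : xk1 - xt = γ • (F xtm - F xt) := by rw [hxk1]; nth_rw 2 [hxt]; module
    have h := hLip xk1 xt
    rw [hstep, norm_smul, norm_sub_rev (F xtm)] at h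
    calc ‖F xk1 - F xt‖ ^ 2 ≤ (L * (‖γ‖ * ‖F xt - F xtm‖)) ^ 2 :=
          pow_le_pow_left₀ (norm_nonneg _) h 2
      _ = L ^ 2 * γ ^ 2 * ‖F xt - F xtm‖ ^ 2 := by rw [mul_pow, mul_pow, Real.norm_eq_abs, sq_abs]; ring
end

section
/- Let F be monotone and L-Lipschitz on R^d, let x* satisfy F(x*) = 0, and consider one PEG step x̃^k = x^k - γ F(x̃^{k-1}), x^{k+1} = x^k - γ F(x̃^k) with γ > 0. Then ‖x^{k+1} - x*‖² ≤ ‖x^k - x*‖² + γ²‖F(x̃^{k-1}) - F(x̃^k)‖² - γ²‖F(x̃^{k-1})‖². -/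
/-! Expanding both steps, the two sides differ exactly by `2γ⟪F x̃ᵏ, x̃ᵏ - x*⟫`, which is
nonnegative by monotonicity of `F` between `x̃ᵏ` and the zero `x*`. -/

open scoped RealInnerProductSpace

theorem norm_sub_smul_sq_eq_extrapolated {E : Type*} [NormedAddCommGroup E]
    [InnerProductSpace ℝ E] (u a b : E) (γ : ℝ) :
    ‖u - γ • a‖ ^ 2 = ‖u‖ ^ 2 + γ ^ 2 * ‖b - a‖ ^ 2 - γ ^ 2 * ‖b‖ ^ 2 - 2 * γ * ⟪a, u - γ • b⟫ := by
  rw [norm_sub_sq_real, norm_sub_sq_real, inner_sub_right, real_inner_smul_right,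
    real_inner_smul_right, norm_smul, mul_pow, Real.norm_eq_abs, sq_abs, real_inner_comm u a,
    real_inner_comm b a]
  ring

theorem peg_distance_decrease_general (d : ℕ)
    (F : EuclideanSpace ℝ (Fin d) → EuclideanSpace ℝ (Fin d)) (γ : ℝ)
    (hmono : ∀ x y, 0 ≤ ⟪F x - F y, x - y⟫)
    (hγ : 0 < γ)
    (xs : EuclideanSpace ℝ (Fin d)) (hxs : F xs = 0)
    (xk xk1 xtm xt : EuclideanSpace ℝ (Fin d))
    (hxt : xt = xk - γ • F xtm)
    (hxk1 : xk1 = xk - γ • F xt) :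
    ‖xk1 - xs‖ ^ 2 ≤ ‖xk - xs‖ ^ 2 + γ ^ 2 * ‖F xtm - F xt‖ ^ 2 - γ ^ 2 * ‖F xtm‖ ^ 2 := by
  have hinner : 0 ≤ ⟪F xt, xt - xs⟫ := by simpa [hxs] using hmono xt xs
  have hstep : xk1 - xs = (xk - xs) - γ • F xt := by rw [hxk1]; abel
  have hextra : (xk - xs) - γ • F xtm = xt - xs := by rw [hxt]; abel
  rw [hstep, norm_sub_smul_sq_eq_extrapolated (xk - xs) (F xt) (F xtm) γ, hextra]
  linarith [mul_nonneg hγ.le hinner]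

theorem peg_distance_decrease (d : ℕ)
    (F : EuclideanSpace ℝ (Fin d) → EuclideanSpace ℝ (Fin d)) (L γ : ℝ)
    (hmono : ∀ x y, 0 ≤ ⟪F x - F y, x - y⟫)
    (hLip : ∀ x y, ‖F x - F y‖ ≤ L * ‖x - y‖)
    (hγ : 0 < γ)
    (xs : EuclideanSpace ℝ (Fin d)) (hxs : F xs = 0)
    (xk xk1 xtm xt : EuclideanSpace ℝ (Fin d))
    (hxt : xt = xk - γ • F xtm)
    (hxk1 : xk1 = xk - γ • F xt) :
    ‖xk1 - xs‖ ^ 2 ≤ ‖xk - xs‖ ^ 2 + γ ^ 2 * ‖F xtm - F xt‖ ^ 2 - γ ^ 2 * ‖F xtm‖ ^ 2 :=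
  peg_distance_decrease_general d F γ hmono hγ xs hxs xk xk1 xtm xt hxt hxk1
end

section
/- Let F be monotone and L-Lipschitz on R^d with a zero x*, and let {x^k, x̃^k} be iterates of PEG with stepsize γ ≤ 1/(3L) (initialized by x̃^0 = x^0, x^1 = x^0 - γF(x^0), then x̃^k = x^k - γ F(x̃^{k-1}), x^{k+1} = x^k - γ F(x̃^k)). Define Φ_k = ‖x^k - x*‖² + ((k+32)/3)γ²(‖F(x^k)‖² + 2‖F(x^k) - F(x̃^{k-1})‖²), with the convention F(x̃^{-1}) = 0. Then Φ_{k+1} ≤ Φ_k for all k ≥ 0. -/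
/-!
Write `a = F(x^k)`, `b = F(x̃^{k-1})`, `c = F(x̃^k)`, `e = F(x^{k+1})`. Monotonicity of `F` on the
pairs `(x^k, x̃^k)`, `(x^k, x^{k+1})` and the Lipschitz bounds `‖a - e‖ ≤ ‖c‖ / 3`,
`‖c - e‖ ≤ ‖c - b‖ / 3` (from `γL ≤ 1/3`) are quadratic constraints on the Gram matrix of
`a, b, c, e`, and sum-of-squares certificates turn them into two inequalities. First, the operator
term `‖a‖² + 2‖a - b‖²` of `Φ_k` does not increase, which pays for the growing part `k/3` of its
weight. Second, passing from weight `32/3` to weight `11` on it releases enough to absorb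
`γ²(‖c‖² - 2⟪c, b⟫)`, the amount by which monotonicity on `(x̃^k, x*)` allows `‖x^k - x*‖²`
to grow.
-/

open scoped RealInnerProductSpace

variable {E : Type*} [NormedAddCommGroup E] [InnerProductSpace ℝ E]

section GramInequalities

lemma norm_smul_add_smul_add_smul_add_smul_sq (a b c e : E) (p q r s : ℝ) :
    ‖p • a + q • b + r • c + s • e‖ ^ 2 =
      p ^ 2 * ‖a‖ ^ 2 + q ^ 2 * ‖b‖ ^ 2 + r ^ 2 * ‖c‖ ^ 2 + s ^ 2 * ‖e‖ ^ 2
        + 2 * p * q * ⟪a, b⟫ + 2 * p * r * ⟪a, c⟫ + 2 * p * s * ⟪a, e⟫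
        + 2 * q * r * ⟪b, c⟫ + 2 * q * s * ⟪b, e⟫ + 2 * r * s * ⟪c, e⟫ := by
  rw [← real_inner_self_eq_norm_sq]
  simp only [inner_add_left, inner_add_right, real_inner_smul_left, real_inner_smul_right]
  simp only [real_inner_self_eq_norm_sq]
  rw [real_inner_comm b a, real_inner_comm c a, real_inner_comm e a, real_inner_comm c b,
    real_inner_comm e b, real_inner_comm e c]
  ring

variable {a b c e : E}

lemma peg_operator_term_le (hace : 0 ≤ ⟪a - e, c⟫) (hce : ‖c - e‖ ^ 2 ≤ ‖c - b‖ ^ 2 / 9) :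
    ‖e‖ ^ 2 + 2 * ‖e - c‖ ^ 2 ≤ ‖a‖ ^ 2 + 2 * ‖a - b‖ ^ 2 := by
  rw [inner_sub_left] at hace
  linarith [sq_nonneg ‖(3 : ℝ) • a + (-2 : ℝ) • b + (-1 : ℝ) • c + (0 : ℝ) • e‖,
    norm_smul_add_smul_add_smul_add_smul_sq a b c e 3 (-2) (-1) 0,
    sq_nonneg ‖(0 : ℝ) • a + (1 : ℝ) • b + (-1 : ℝ) • c + (0 : ℝ) • e‖,
    norm_smul_add_smul_add_smul_add_smul_sq a b c e 0 1 (-1) 0,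
    norm_sub_sq_real e c, norm_sub_sq_real a b, norm_sub_sq_real c e, norm_sub_sq_real c b,
    real_inner_comm e c, real_inner_comm c b, real_inner_comm a b, real_inner_comm a c]

lemma peg_operator_term_absorbs (hacb : 0 ≤ ⟪a - c, b⟫) (hace : 0 ≤ ⟪a - e, c⟫)
    (hae : ‖a - e‖ ^ 2 ≤ ‖c‖ ^ 2 / 9) (hce : ‖c - e‖ ^ 2 ≤ ‖c - b‖ ^ 2 / 9) :
    ‖c‖ ^ 2 - 2 * ⟪c, b⟫ + 11 * (‖e‖ ^ 2 + 2 * ‖e - c‖ ^ 2)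
      ≤ 32 / 3 * (‖a‖ ^ 2 + 2 * ‖a - b‖ ^ 2) := by
  rw [inner_sub_left] at hacb hace
  -- the certificate was found by semidefinite programming
  linarith [sq_nonneg ‖e‖, sq_nonneg ‖(216 : ℝ) • a + (-131 : ℝ) • b + (-69 : ℝ) • c + (-24 : ℝ) • e‖,
    norm_smul_add_smul_add_smul_add_smul_sq a b c e 216 (-131) (-69) (-24),
    sq_nonneg ‖(0 : ℝ) • a + (5879 : ℝ) • b + (-2487 : ℝ) • c + (-3144 : ℝ) • e‖,
    norm_smul_add_smul_add_smul_add_smul_sq a b c e 0 5879 (-2487) (-3144),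
    sq_nonneg ‖(0 : ℝ) • a + (0 : ℝ) • b + (18152 : ℝ) • c + (-28361 : ℝ) • e‖,
    norm_smul_add_smul_add_smul_add_smul_sq a b c e 0 0 18152 (-28361),
    norm_sub_sq_real e c, norm_sub_sq_real a b, norm_sub_sq_real c e, norm_sub_sq_real c b,
    norm_sub_sq_real a e, real_inner_comm e c, real_inner_comm c b, real_inner_comm a b,
    real_inner_comm a c]

end GramInequalities

section PEGStep

variable {F : E → E} {L γ : ℝ} {u v w x y x' xs b : E}

lemma inner_sub_nonneg_of_sub_eq_smul (hmono : ∀ x y, 0 ≤ ⟪F x - F y, x - y⟫) (hγ : 0 < γ)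
    (h : u - v = γ • w) : 0 ≤ ⟪F u - F v, w⟫ := by
  have := hmono u v
  rw [h, real_inner_smul_right] at this
  exact nonneg_of_mul_nonneg_right this hγ

lemma norm_sub_sq_le_of_sub_eq_smul (hLip : ∀ x y, ‖F x - F y‖ ≤ L * ‖x - y‖) (hγ : 0 ≤ γ)
    (hγL : γ * L ≤ 1 / 3) (h : u - v = γ • w) : ‖F u - F v‖ ^ 2 ≤ ‖w‖ ^ 2 / 9 := by
  have hle : ‖F u - F v‖ ≤ ‖w‖ / 3 := by
    have := hLip u v
    rw [h, norm_smul, Real.norm_of_nonneg hγ] at this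
    nlinarith [norm_nonneg w]
  nlinarith [norm_nonneg (F u - F v)]

lemma peg_dist_sq_le (hmono : ∀ x y, 0 ≤ ⟪F x - F y, x - y⟫) (hγ : 0 ≤ γ) (hxs : F xs = 0)
    (hy : y = x - γ • b) (hx' : x' = x - γ • F y) :
    ‖x' - xs‖ ^ 2 ≤ ‖x - xs‖ ^ 2 + γ ^ 2 * (‖F y‖ ^ 2 - 2 * ⟪F y, b⟫) := by
  have hmono_xs : 0 ≤ ⟪F y, x - xs⟫ - γ * ⟪F y, b⟫ := by
    have hyxs : y - xs = x - xs - γ • b := by rw [hy, sub_right_comm]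
    have := hmono y xs
    rwa [hxs, sub_zero, hyxs, inner_sub_right, real_inner_smul_right] at this
  have hexpand : ‖x' - xs‖ ^ 2 = ‖x - xs‖ ^ 2 - 2 * γ * ⟪F y, x - xs⟫ + γ ^ 2 * ‖F y‖ ^ 2 := by
    rw [hx', sub_right_comm, norm_sub_sq_real, real_inner_smul_right, norm_smul,
      Real.norm_of_nonneg hγ, real_inner_comm]
    ring
  nlinarith [mul_nonneg hγ hmono_xs]

lemma peg_lyapunov_step (hmono : ∀ x y, 0 ≤ ⟪F x - F y, x - y⟫)
    (hLip : ∀ x y, ‖F x - F y‖ ≤ L * ‖x - y‖) (hγ : 0 < γ) (hγL : γ * L ≤ 1 / 3)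
    (hxs : F xs = 0) (hy : y = x - γ • b) (hx' : x' = x - γ • F y) {t : ℝ} (ht : 0 ≤ t) :
    ‖x' - xs‖ ^ 2 + (t + 33) / 3 * γ ^ 2 * (‖F x'‖ ^ 2 + 2 * ‖F x' - F y‖ ^ 2) ≤
      ‖x - xs‖ ^ 2 + (t + 32) / 3 * γ ^ 2 * (‖F x‖ ^ 2 + 2 * ‖F x - b‖ ^ 2) := by
  have hxy : x - y = γ • b := by rw [hy, sub_sub_cancel]
  have hxx' : x - x' = γ • F y := by rw [hx', sub_sub_cancel]
  have hyx' : y - x' = γ • (F y - b) := by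
    rw [smul_sub, ← hxx', ← hxy]; abel
  have hnonincr := peg_operator_term_le (inner_sub_nonneg_of_sub_eq_smul hmono hγ hxx')
    (norm_sub_sq_le_of_sub_eq_smul hLip hγ.le hγL hyx')
  have habsorb := peg_operator_term_absorbs (inner_sub_nonneg_of_sub_eq_smul hmono hγ hxy)
    (inner_sub_nonneg_of_sub_eq_smul hmono hγ hxx')
    (norm_sub_sq_le_of_sub_eq_smul hLip hγ.le hγL hxx')
    (norm_sub_sq_le_of_sub_eq_smul hLip hγ.le hγL hyx')
  have hdist := peg_dist_sq_le hmono hγ.le hxs hy hx'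
  nlinarith [mul_le_mul_of_nonneg_left hnonincr (mul_nonneg ht (sq_nonneg γ)),
    mul_le_mul_of_nonneg_left habsorb (sq_nonneg γ)]

end PEGStep

theorem peg_lyapunov_decrease_general (d : ℕ)
    (F : EuclideanSpace ℝ (Fin d) → EuclideanSpace ℝ (Fin d)) (L γ : ℝ)
    (hmono : ∀ x y, 0 ≤ ⟪F x - F y, x - y⟫)
    (hLip : ∀ x y, ‖F x - F y‖ ≤ L * ‖x - y‖)
    (hγpos : 0 < γ) (hγ : γ ≤ 1 / (3 * L))
    (xs : EuclideanSpace ℝ (Fin d)) (hxs : F xs = 0)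
    (x xt : ℕ → EuclideanSpace ℝ (Fin d))
    (hxt0 : xt 0 = x 0)
    (hx1 : x 1 = x 0 - γ • F (x 0))
    (hxt : ∀ k, 1 ≤ k → xt k = x k - γ • F (xt (k - 1)))
    (hx : ∀ k, 1 ≤ k → x (k + 1) = x k - γ • F (xt k)) :
    ∀ k : ℕ,
      ‖x (k + 1) - xs‖ ^ 2 +
          (((k : ℝ) + 1 + 32) / 3) * γ ^ 2 *
            (‖F (x (k + 1))‖ ^ 2 + 2 * ‖F (x (k + 1)) - F (xt k)‖ ^ 2) ≤
        ‖x k - xs‖ ^ 2 +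
          (((k : ℝ) + 32) / 3) * γ ^ 2 *
            (‖F (x k)‖ ^ 2 +
              2 * ‖F (x k) - (if k = 0 then 0 else F (xt (k - 1)))‖ ^ 2) := by
  intro k
  have hL : 0 < 3 * L := one_div_pos.mp (hγpos.trans_le hγ)
  have hγL : γ * L ≤ 1 / 3 := by
    rw [le_div_iff₀ hL] at hγ
    linarith
  have hxtk : xt k = x k - γ • (if k = 0 then 0 else F (xt (k - 1))) := by
    cases k with
    | zero => simp [hxt0]
    | succ n => simpa using hxt (n + 1) n.succ_pos
  have hxk : x (k + 1) = x k - γ • F (xt k) := by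
    cases k with
    | zero => rw [hx1, hxt0]
    | succ n => exact hx (n + 1) n.succ_pos
  have := peg_lyapunov_step hmono hLip hγpos hγL hxs hxtk hxk k.cast_nonneg
  linarith

theorem peg_lyapunov_decrease (d : ℕ)
    (F : EuclideanSpace ℝ (Fin d) → EuclideanSpace ℝ (Fin d)) (L γ : ℝ)
    (hL : 0 < L)
    (hmono : ∀ x y, 0 ≤ ⟪F x - F y, x - y⟫)
    (hLip : ∀ x y, ‖F x - F y‖ ≤ L * ‖x - y‖)
    (hγpos : 0 < γ) (hγ : γ ≤ 1 / (3 * L))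
    (xs : EuclideanSpace ℝ (Fin d)) (hxs : F xs = 0)
    (x xt : ℕ → EuclideanSpace ℝ (Fin d))
    (hxt0 : xt 0 = x 0)
    (hx1 : x 1 = x 0 - γ • F (x 0))
    (hxt : ∀ k, 1 ≤ k → xt k = x k - γ • F (xt (k - 1)))
    (hx : ∀ k, 1 ≤ k → x (k + 1) = x k - γ • F (xt k)) :
    ∀ k : ℕ,
      ‖x (k + 1) - xs‖ ^ 2 +
          (((k : ℝ) + 1 + 32) / 3) * γ ^ 2 *
            (‖F (x (k + 1))‖ ^ 2 + 2 * ‖F (x (k + 1)) - F (xt k)‖ ^ 2) ≤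
        ‖x k - xs‖ ^ 2 +
          (((k : ℝ) + 32) / 3) * γ ^ 2 *
            (‖F (x k)‖ ^ 2 +
              2 * ‖F (x k) - (if k = 0 then 0 else F (xt (k - 1)))‖ ^ 2) :=
  peg_lyapunov_decrease_general d F L γ hmono hLip hγpos hγ xs hxs x xt hxt0 hx1 hxt hx
end

section
/- Let F be monotone and L-Lipschitz on R^d with F(x*) = 0, and let {x^k} be iterates of PEG with stepsize γ = 1/(3L). Then for all N ≥ 0, ‖F(x^N)‖² ≤ 123 L² ‖x^0 - x*‖² / (N + 32). -/
open scoped RealInnerProductSpace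

/-!
After rescaling, `G = γ • F` is monotone and `1/3`-Lipschitz and PEG runs with unit stepsize:
`x̃ₖ = xₖ - pₖ` and `xₖ₊₁ = xₖ - G x̃ₖ`, where `pₖ = G x̃ₖ₋₁` is the reused operator value
(`p₀ = 0`).

Two Lyapunov arguments give the rate. First, the energy
`‖xₖ - x*‖² + 3/2 ‖G x̃ₖ - pₖ‖² - 1/4 ‖pₖ‖²` drops by at least `3/4 ‖pₖ‖²` per step. This keeps
`x̃ₖ` within `√3 ‖x₀ - x*‖` of `x*`, so that `‖xₖ - x*‖² ≤ 5/4 ‖x₀ - x*‖²` and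
`∑ₖ ‖G x̃ₖ‖² ≤ 5/3 ‖x₀ - x*‖²`. Second, an explicit quadratic form in `(G xₖ, G x̃ₖ, pₖ)` is
nonincreasing along the iterates, dominates `‖G xₖ‖²` and is dominated by
`5/2 (‖G x̃ₖ‖² + ‖pₖ‖²)`; averaging it over `k ≤ N` gives
`(N + 1) ‖G x_N‖² ≤ 5 ∑_{k ≤ N} ‖G x̃ₖ‖²`. Together with `‖G x_N‖² ≤ 5/36 ‖x₀ - x*‖²` this is
the claim.
-/

open Finset

theorem norm_sub_sq_le_three_halves_mul_add {E : Type*} [SeminormedAddCommGroup E] (u v : E) :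
    ‖u - v‖ ^ 2 ≤ 3 / 2 * ‖u‖ ^ 2 + 3 * ‖v‖ ^ 2 := by
  nlinarith [norm_sub_le u v, norm_nonneg (u - v), sq_nonneg (‖u‖ - 2 * ‖v‖)]

section InnerProduct

variable {E : Type*} [NormedAddCommGroup E] [InnerProductSpace ℝ E]

theorem norm_sub_sq_le_of_inner_nonneg {u v w : E} (h : 0 ≤ ⟪v, u - w⟫) :
    ‖u - v‖ ^ 2 ≤ ‖u‖ ^ 2 + ‖v - w‖ ^ 2 - ‖w‖ ^ 2 := by
  rw [inner_sub_right] at h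
  rw [norm_sub_sq_real, norm_sub_sq_real, real_inner_comm v u]
  linarith

/-- The potential of the last iterate, evaluated at `(G xₖ, G x̃ₖ, G x̃ₖ₋₁)`. The three
inequalities below are sum-of-squares certificates: each is a nonnegative combination of its
hypotheses and of the squares listed in its proof. -/
noncomputable def pegPotential (g h p : E) : ℝ :=
  ‖g‖ ^ 2 - ‖h‖ ^ 2 / 4 + ‖p‖ ^ 2 / 2 + ⟪g, h⟫ - ⟪g, p⟫ / 2 - ⟪h, p⟫ / 2

theorem norm_sq_le_pegPotential {g h p : E} (hgh : ‖g - h‖ ^ 2 ≤ ‖p‖ ^ 2 / 9)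
    (hgp : 0 ≤ ⟪g - h, p⟫) : ‖g‖ ^ 2 ≤ pegPotential g h p := by
  have q₁ : (0 : ℝ) ≤ ‖g - (3 / 4 : ℝ) • p‖ ^ 2 := by positivity
  have q₂ : (0 : ℝ) ≤ ‖h - (1 / 2 : ℝ) • p‖ ^ 2 := by positivity
  unfold pegPotential
  simp only [← real_inner_self_eq_norm_sq, inner_sub_left, inner_sub_right,
    real_inner_smul_left, real_inner_smul_right] at q₁ q₂ hgh hgp ⊢
  linarith [real_inner_comm g h, real_inner_comm g p, real_inner_comm h p,
    real_inner_self_nonneg (x := p)]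

theorem pegPotential_le {g h p : E} (hgh : ‖g - h‖ ^ 2 ≤ ‖p‖ ^ 2 / 9)
    (hgp : 0 ≤ ⟪g - h, p⟫) : pegPotential g h p ≤ 5 / 2 * (‖h‖ ^ 2 + ‖p‖ ^ 2) := by
  have q₁ : (0 : ℝ) ≤ ‖g - (9 / 7 : ℝ) • h - (2 / 7 : ℝ) • p‖ ^ 2 := by positivity
  have q₂ : (0 : ℝ) ≤ ‖h + (2 / 9 : ℝ) • p‖ ^ 2 := by positivity
  unfold pegPotential
  simp only [← real_inner_self_eq_norm_sq, inner_sub_left, inner_sub_right, inner_add_left,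
    inner_add_right, real_inner_smul_left, real_inner_smul_right] at q₁ q₂ hgh hgp ⊢
  linarith [real_inner_comm g h, real_inner_comm g p, real_inner_comm h p,
    real_inner_self_nonneg (x := p)]

theorem pegPotential_next_le {g g' h h' p : E} (hhg : ‖h - g'‖ ^ 2 ≤ ‖h - p‖ ^ 2 / 9)
    (hgh : 0 ≤ ⟪g - g', h⟫) : pegPotential g' h' h ≤ pegPotential g h p := by
  have q₁ : (0 : ℝ) ≤ ‖g - (1 / 4 : ℝ) • p - (3 / 4 : ℝ) • h‖ ^ 2 := by positivity
  have q₂ : (0 : ℝ) ≤ ‖g' - (5 / 7 : ℝ) • h - (2 / 7 : ℝ) • h'‖ ^ 2 := by positivity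
  have q₃ : (0 : ℝ) ≤ ‖p - h‖ ^ 2 := by positivity
  have q₄ : (0 : ℝ) ≤ ‖h - h'‖ ^ 2 := by positivity
  unfold pegPotential
  simp only [← real_inner_self_eq_norm_sq, inner_sub_left, inner_sub_right,
    real_inner_smul_left, real_inner_smul_right] at q₁ q₂ q₃ q₄ hhg hgh ⊢
  linarith [real_inner_comm g p, real_inner_comm g h, real_inner_comm g h',
    real_inner_comm g g', real_inner_comm g' p, real_inner_comm g' h,
    real_inner_comm g' h', real_inner_comm p h, real_inner_comm p h',
    real_inner_comm h h']

end InnerProduct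

section Iteration

variable {E : Type*} [AddCommGroup E]

/-- PEG with unit stepsize; stepsize `γ` for `F` is this scheme for `γ • F`. -/
structure IsPEG (G : E → E) (x xt : ℕ → E) : Prop where
  xt_zero : xt 0 = x 0
  x_succ (k : ℕ) : x (k + 1) = x k - G (xt k)
  xt_succ (k : ℕ) : xt (k + 1) = x (k + 1) - G (xt k)

/-- The operator value reused at step `k`; taking it to be `0` at `k = 0` makes
`xt k = x k - pastGrad G xt k` hold for every `k`. -/
def pastGrad (G : E → E) (xt : ℕ → E) : ℕ → E
  | 0 => 0
  | k + 1 => G (xt k)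

@[simp] theorem pastGrad_zero (G : E → E) (xt : ℕ → E) : pastGrad G xt 0 = 0 := rfl

@[simp] theorem pastGrad_succ (G : E → E) (xt : ℕ → E) (k : ℕ) :
    pastGrad G xt (k + 1) = G (xt k) := rfl

namespace IsPEG

variable {G : E → E} {x xt : ℕ → E}

theorem xt_eq (hp : IsPEG G x xt) (k : ℕ) : xt k = x k - pastGrad G xt k := by
  cases k with
  | zero => simp [hp.xt_zero]
  | succ k => exact hp.xt_succ k

theorem x_sub_x_succ (hp : IsPEG G x xt) (k : ℕ) : x k - x (k + 1) = G (xt k) := by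
  rw [hp.x_succ]; abel

theorem x_sub_xt (hp : IsPEG G x xt) (k : ℕ) : x k - xt k = pastGrad G xt k := by
  rw [hp.xt_eq k]; abel

theorem xt_sub_x_succ (hp : IsPEG G x xt) (k : ℕ) :
    xt k - x (k + 1) = G (xt k) - pastGrad G xt k := by
  linear_combination (norm := module) hp.xt_eq k - hp.x_succ k

theorem xt_succ_sub_xt (hp : IsPEG G x xt) (k : ℕ) :
    xt (k + 1) - xt k = -(G (xt k) + (G (xt k) - pastGrad G xt k)) := by
  linear_combination (norm := module) hp.xt_succ k + hp.x_succ k - hp.xt_eq k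

end IsPEG

end Iteration

section Lipschitz

variable {E : Type*} [SeminormedAddCommGroup E] {G : E → E} {xs : E}

theorem norm_apply_sub_sq_le (hLip : ∀ a b, ‖G a - G b‖ ≤ ‖a - b‖ / 3) (a b : E) :
    ‖G a - G b‖ ^ 2 ≤ ‖a - b‖ ^ 2 / 9 := by
  nlinarith [hLip a b, norm_nonneg (G a - G b)]

theorem norm_apply_sq_le (hLip : ∀ a b, ‖G a - G b‖ ≤ ‖a - b‖ / 3) (hxs : G xs = 0) (a : E) :
    ‖G a‖ ^ 2 ≤ ‖a - xs‖ ^ 2 / 9 := by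
  simpa [hxs] using norm_apply_sub_sq_le hLip a xs

noncomputable def pegEnergy (G : E → E) (x xt : ℕ → E) (xs : E) (k : ℕ) : ℝ :=
  ‖x k - xs‖ ^ 2 + 3 / 2 * ‖G (xt k) - pastGrad G xt k‖ ^ 2 - ‖pastGrad G xt k‖ ^ 2 / 4

namespace IsPEG

variable {x xt : ℕ → E}

theorem norm_apply_sub_pastGrad_succ_le (hp : IsPEG G x xt)
    (hLip : ∀ a b, ‖G a - G b‖ ≤ ‖a - b‖ / 3) (k : ℕ) :
    ‖G (xt (k + 1)) - pastGrad G xt (k + 1)‖ ≤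
      (‖G (xt k)‖ + ‖G (xt k) - pastGrad G xt k‖) / 3 := by
  calc ‖G (xt (k + 1)) - G (xt k)‖ ≤ ‖xt (k + 1) - xt k‖ / 3 := hLip _ _
    _ = ‖G (xt k) + (G (xt k) - pastGrad G xt k)‖ / 3 := by rw [hp.xt_succ_sub_xt, norm_neg]
    _ ≤ _ := by gcongr; exact norm_add_le _ _

theorem pegEnergy_zero_le (hp : IsPEG G x xt) (hLip : ∀ a b, ‖G a - G b‖ ≤ ‖a - b‖ / 3)
    (hxs : G xs = 0) : pegEnergy G x xt xs 0 ≤ 7 / 6 * ‖x 0 - xs‖ ^ 2 := by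
  have := norm_apply_sq_le hLip hxs (x 0)
  simp only [pegEnergy, pastGrad_zero, sub_zero, norm_zero, hp.xt_zero]
  linarith

end IsPEG

end Lipschitz

namespace IsPEG

variable {E : Type*} [NormedAddCommGroup E] [InnerProductSpace ℝ E]
  {G : E → E} {x xt : ℕ → E} {xs : E}

theorem norm_x_succ_sub_sq_le (hp : IsPEG G x xt) (hmono : ∀ a b, 0 ≤ ⟪G a - G b, a - b⟫)
    (hxs : G xs = 0) (k : ℕ) :
    ‖x (k + 1) - xs‖ ^ 2 ≤
      ‖x k - xs‖ ^ 2 + ‖G (xt k) - pastGrad G xt k‖ ^ 2 - ‖pastGrad G xt k‖ ^ 2 := by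
  have hx : x (k + 1) - xs = (x k - xs) - G (xt k) := by rw [hp.x_succ]; abel
  have hxt : xt k - xs = (x k - xs) - pastGrad G xt k := by rw [hp.xt_eq k]; abel
  have hpos := hmono (xt k) xs
  rw [hxs, sub_zero, hxt] at hpos
  rw [hx]
  exact norm_sub_sq_le_of_inner_nonneg hpos

theorem pegEnergy_succ_add_le (hp : IsPEG G x xt) (hmono : ∀ a b, 0 ≤ ⟪G a - G b, a - b⟫)
    (hLip : ∀ a b, ‖G a - G b‖ ≤ ‖a - b‖ / 3) (hxs : G xs = 0) (k : ℕ) :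
    pegEnergy G x xt xs (k + 1) + 3 / 4 * ‖pastGrad G xt k‖ ^ 2 ≤ pegEnergy G x xt xs k := by
  have hdesc := hp.norm_x_succ_sub_sq_le hmono hxs k
  have hdiff := hp.norm_apply_sub_pastGrad_succ_le hLip k
  have hsq : ‖G (xt (k + 1)) - pastGrad G xt (k + 1)‖ ^ 2 ≤
      ‖G (xt k)‖ ^ 2 / 6 + ‖G (xt k) - pastGrad G xt k‖ ^ 2 / 3 := by
    nlinarith [norm_nonneg (G (xt (k + 1)) - pastGrad G xt (k + 1)),
      sq_nonneg (‖G (xt k)‖ - 2 * ‖G (xt k) - pastGrad G xt k‖)]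
  rw [pastGrad_succ] at hsq
  unfold pegEnergy
  rw [pastGrad_succ]
  linarith

theorem pegEnergy_add_sum_le (hp : IsPEG G x xt) (hmono : ∀ a b, 0 ≤ ⟪G a - G b, a - b⟫)
    (hLip : ∀ a b, ‖G a - G b‖ ≤ ‖a - b‖ / 3) (hxs : G xs = 0) (n : ℕ) :
    pegEnergy G x xt xs (n + 1) + 3 / 4 * ∑ k ∈ range n, ‖G (xt k)‖ ^ 2 ≤
      pegEnergy G x xt xs 0 := by
  induction n with
  | zero => simpa using hp.pegEnergy_succ_add_le hmono hLip hxs 0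
  | succ n ih =>
    have hstep := hp.pegEnergy_succ_add_le hmono hLip hxs (n + 1)
    rw [pastGrad_succ] at hstep
    rw [sum_range_succ]
    linarith

theorem norm_x_succ_sub_sq_add_sum_le_add (hp : IsPEG G x xt)
    (hmono : ∀ a b, 0 ≤ ⟪G a - G b, a - b⟫) (hLip : ∀ a b, ‖G a - G b‖ ≤ ‖a - b‖ / 3)
    (hxs : G xs = 0) (n : ℕ) :
    ‖x (n + 1) - xs‖ ^ 2 + 3 / 4 * ∑ k ∈ range n, ‖G (xt k)‖ ^ 2 ≤
      7 / 6 * ‖x 0 - xs‖ ^ 2 + ‖G (xt n)‖ ^ 2 / 4 := by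
  have h := hp.pegEnergy_add_sum_le hmono hLip hxs n
  have h0 := hp.pegEnergy_zero_le hLip hxs
  have h1 : ‖x (n + 1) - xs‖ ^ 2 - ‖G (xt n)‖ ^ 2 / 4 ≤ pegEnergy G x xt xs (n + 1) := by
    unfold pegEnergy
    rw [pastGrad_succ]
    linarith [sq_nonneg ‖G (xt (n + 1)) - G (xt n)‖]
  linarith

theorem norm_xt_sub_sq_le (hp : IsPEG G x xt) (hmono : ∀ a b, 0 ≤ ⟪G a - G b, a - b⟫)
    (hLip : ∀ a b, ‖G a - G b‖ ≤ ‖a - b‖ / 3) (hxs : G xs = 0) (n : ℕ) :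
    ‖xt n - xs‖ ^ 2 ≤ 3 * ‖x 0 - xs‖ ^ 2 := by
  induction n with
  | zero => rw [hp.xt_zero]; linarith [sq_nonneg ‖x 0 - xs‖]
  | succ n ih =>
    have hr := norm_apply_sq_le hLip hxs (xt n)
    have hx := hp.norm_x_succ_sub_sq_add_sum_le_add hmono hLip hxs n
    have hsum : 0 ≤ ∑ k ∈ range n, ‖G (xt k)‖ ^ 2 := sum_nonneg fun _ _ => sq_nonneg _
    have hxt : xt (n + 1) - xs = (x (n + 1) - xs) - G (xt n) := by rw [hp.xt_succ]; abel
    rw [hxt]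
    nlinarith [norm_sub_sq_le_three_halves_mul_add (x (n + 1) - xs) (G (xt n))]

theorem norm_x_succ_sub_sq_add_sum_le (hp : IsPEG G x xt)
    (hmono : ∀ a b, 0 ≤ ⟪G a - G b, a - b⟫) (hLip : ∀ a b, ‖G a - G b‖ ≤ ‖a - b‖ / 3)
    (hxs : G xs = 0) (n : ℕ) :
    ‖x (n + 1) - xs‖ ^ 2 + 3 / 4 * ∑ k ∈ range n, ‖G (xt k)‖ ^ 2 ≤ 5 / 4 * ‖x 0 - xs‖ ^ 2 := by
  have hr := norm_apply_sq_le hLip hxs (xt n)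
  have hxt := hp.norm_xt_sub_sq_le hmono hLip hxs n
  linarith [hp.norm_x_succ_sub_sq_add_sum_le_add hmono hLip hxs n]

theorem potential_succ_le (hp : IsPEG G x xt) (hmono : ∀ a b, 0 ≤ ⟪G a - G b, a - b⟫)
    (hLip : ∀ a b, ‖G a - G b‖ ≤ ‖a - b‖ / 3) (k : ℕ) :
    pegPotential (G (x (k + 1))) (G (xt (k + 1))) (pastGrad G xt (k + 1)) ≤
      pegPotential (G (x k)) (G (xt k)) (pastGrad G xt k) := by
  refine pegPotential_next_le ?_ ?_
  · simpa [hp.xt_sub_x_succ k] using norm_apply_sub_sq_le hLip (xt k) (x (k + 1))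
  · simpa [hp.x_sub_x_succ k] using hmono (x k) (x (k + 1))

theorem norm_sq_le_potential (hp : IsPEG G x xt) (hmono : ∀ a b, 0 ≤ ⟪G a - G b, a - b⟫)
    (hLip : ∀ a b, ‖G a - G b‖ ≤ ‖a - b‖ / 3) (k : ℕ) :
    ‖G (x k)‖ ^ 2 ≤ pegPotential (G (x k)) (G (xt k)) (pastGrad G xt k) := by
  refine norm_sq_le_pegPotential ?_ ?_
  · simpa [hp.x_sub_xt k] using norm_apply_sub_sq_le hLip (x k) (xt k)
  · simpa [hp.x_sub_xt k] using hmono (x k) (xt k)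

theorem potential_le (hp : IsPEG G x xt) (hmono : ∀ a b, 0 ≤ ⟪G a - G b, a - b⟫)
    (hLip : ∀ a b, ‖G a - G b‖ ≤ ‖a - b‖ / 3) (k : ℕ) :
    pegPotential (G (x k)) (G (xt k)) (pastGrad G xt k) ≤
      5 / 2 * (‖G (xt k)‖ ^ 2 + ‖pastGrad G xt k‖ ^ 2) := by
  refine pegPotential_le ?_ ?_
  · simpa [hp.x_sub_xt k] using norm_apply_sub_sq_le hLip (x k) (xt k)
  · simpa [hp.x_sub_xt k] using hmono (x k) (xt k)

theorem succ_mul_norm_sq_le_sum (hp : IsPEG G x xt) (hmono : ∀ a b, 0 ≤ ⟪G a - G b, a - b⟫)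
    (hLip : ∀ a b, ‖G a - G b‖ ≤ ‖a - b‖ / 3) (N : ℕ) :
    (N + 1) * ‖G (x N)‖ ^ 2 ≤ 5 * ∑ k ∈ range (N + 1), ‖G (xt k)‖ ^ 2 := by
  set Φ := fun k => pegPotential (G (x k)) (G (xt k)) (pastGrad G xt k)
  have hanti : Antitone Φ := antitone_nat_of_succ_le (hp.potential_succ_le hmono hLip)
  have hpast : ∑ k ∈ range (N + 1), ‖pastGrad G xt k‖ ^ 2 ≤
      ∑ k ∈ range (N + 1), ‖G (xt k)‖ ^ 2 := by
    rw [sum_range_succ', sum_range_succ]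
    simp only [pastGrad_succ, pastGrad_zero, norm_zero]
    linarith [sq_nonneg ‖G (xt N)‖]
  calc (N + 1) * ‖G (x N)‖ ^ 2 ≤ ∑ k ∈ range (N + 1), Φ N := by
        rw [sum_const, card_range, nsmul_eq_mul]; push_cast
        exact mul_le_mul_of_nonneg_left (hp.norm_sq_le_potential hmono hLip N) (by positivity)
    _ ≤ ∑ k ∈ range (N + 1), Φ k :=
        sum_le_sum fun k hk => hanti (Nat.lt_succ_iff.mp (mem_range.mp hk))
    _ ≤ ∑ k ∈ range (N + 1), 5 / 2 * (‖G (xt k)‖ ^ 2 + ‖pastGrad G xt k‖ ^ 2) :=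
        sum_le_sum fun k _ => hp.potential_le hmono hLip k
    _ ≤ 5 * ∑ k ∈ range (N + 1), ‖G (xt k)‖ ^ 2 := by
        rw [← mul_sum, sum_add_distrib]; linarith

theorem norm_sq_mul_le (hp : IsPEG G x xt) (hmono : ∀ a b, 0 ≤ ⟪G a - G b, a - b⟫)
    (hLip : ∀ a b, ‖G a - G b‖ ≤ ‖a - b‖ / 3) (hxs : G xs = 0) (N : ℕ) :
    ‖G (x N)‖ ^ 2 * (N + 32) ≤ 41 / 3 * ‖x 0 - xs‖ ^ 2 := by
  have hsum := hp.norm_x_succ_sub_sq_add_sum_le hmono hLip hxs (N + 1)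
  have hx : ‖x N - xs‖ ^ 2 ≤ 5 / 4 * ‖x 0 - xs‖ ^ 2 := by
    cases N with
    | zero => linarith [sq_nonneg ‖x 0 - xs‖]
    | succ n =>
      have := hp.norm_x_succ_sub_sq_add_sum_le hmono hLip hxs n
      have : 0 ≤ ∑ k ∈ range n, ‖G (xt k)‖ ^ 2 := sum_nonneg fun _ _ => sq_nonneg _
      linarith
  have hG := norm_apply_sq_le hLip hxs (x N)
  have hN := hp.succ_mul_norm_sq_le_sum hmono hLip N
  have hsplit : ‖G (x N)‖ ^ 2 * (N + 32) = (N + 1) * ‖G (x N)‖ ^ 2 + 31 * ‖G (x N)‖ ^ 2 := by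
    ring
  linarith [sq_nonneg ‖x (N + 1 + 1) - xs‖, sq_nonneg ‖x 0 - xs‖]

end IsPEG

theorem peg_last_iterate_rate (d : ℕ)
    (F : EuclideanSpace ℝ (Fin d) → EuclideanSpace ℝ (Fin d)) (L γ : ℝ)
    (hL : 0 < L)
    (hmono : ∀ x y, 0 ≤ ⟪F x - F y, x - y⟫)
    (hLip : ∀ x y, ‖F x - F y‖ ≤ L * ‖x - y‖)
    (hγ : γ = 1 / (3 * L))
    (xs : EuclideanSpace ℝ (Fin d)) (hxs : F xs = 0)
    (x xt : ℕ → EuclideanSpace ℝ (Fin d))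
    (hxt0 : xt 0 = x 0)
    (hx1 : x 1 = x 0 - γ • F (x 0))
    (hxt : ∀ k, 1 ≤ k → xt k = x k - γ • F (xt (k - 1)))
    (hx : ∀ k, 1 ≤ k → x (k + 1) = x k - γ • F (xt k)) :
    ∀ N : ℕ, ‖F (x N)‖ ^ 2 ≤ 123 * L ^ 2 * ‖x 0 - xs‖ ^ 2 / ((N : ℝ) + 32) := by
  intro N
  have hγ₀ : 0 < γ := by rw [hγ]; positivity
  have hp : IsPEG (fun z => γ • F z) x xt :=
    { xt_zero := hxt0
      x_succ := fun k => by
        rcases k with _ | k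
        · rw [hx1, hxt0]
        · exact hx (k + 1) (by omega)
      xt_succ := fun k => hxt (k + 1) (by omega) }
  have hmonoG : ∀ a b, 0 ≤ ⟪γ • F a - γ • F b, a - b⟫ := fun a b => by
    rw [← smul_sub, real_inner_smul_left]; exact mul_nonneg hγ₀.le (hmono a b)
  have hLipG : ∀ a b, ‖γ • F a - γ • F b‖ ≤ ‖a - b‖ / 3 := fun a b => by
    rw [← smul_sub, norm_smul, Real.norm_of_nonneg hγ₀.le]
    calc γ * ‖F a - F b‖ ≤ γ * (L * ‖a - b‖) := by gcongr; exact hLip a b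
      _ = ‖a - b‖ / 3 := by rw [hγ]; field_simp
  have hrate := hp.norm_sq_mul_le hmonoG hLipG (xs := xs) (by rw [hxs, smul_zero]) N
  have hF : ‖F (x N)‖ = 3 * L * ‖γ • F (x N)‖ := by
    rw [norm_smul, Real.norm_of_nonneg hγ₀.le, hγ]; field_simp
  rw [le_div_iff₀ (by positivity), hF]
  calc (3 * L * ‖γ • F (x N)‖) ^ 2 * (N + 32)
      = (3 * L) ^ 2 * (‖γ • F (x N)‖ ^ 2 * (N + 32)) := by ring
    _ ≤ (3 * L) ^ 2 * (41 / 3 * ‖x 0 - xs‖ ^ 2) := by gcongr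
    _ = 123 * L ^ 2 * ‖x 0 - xs‖ ^ 2 := by ring
end

section
/- Let X ⊆ R^d be nonempty closed convex and F be L-Lipschitz. If x̃^{k-1} = proj_X[x^{k-1} - γ F(x̃^{k-2})], x^k = proj_X[x^{k-1} - γ F(x̃^{k-1})], x̃^k = proj_X[x^k - γ F(x̃^{k-1})], then ‖x̃^k - x̃^{k-1}‖² ≤ 4‖x̃^k - x^k‖² + 4γ²L²‖x̃^{k-1} - x̃^{k-2}‖² - ‖x̃^k - x̃^{k-1}‖². -/
open scoped RealInnerProductSpace

/-- `IsProjOn X z p` means `p` is the Euclidean projection of `z` onto `X`: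
`p ∈ X` and `p` minimizes the distance to `z` over `X`. -/
def IsProjOn {d : ℕ} (X : Set (EuclideanSpace ℝ (Fin d))) (z p : EuclideanSpace ℝ (Fin d)) : Prop :=
  p ∈ X ∧ ∀ y ∈ X, ‖p - z‖ ≤ ‖y - z‖

/-!
The new point `x^k` and the previous extrapolation `x̃^{k-1}` are projections onto `X` of two
points that differ only by `γ (F x̃^{k-2} - F x̃^{k-1})`. Projections onto a convex set are
nonexpansive, so `‖x^k - x̃^{k-1}‖ ≤ |γ| L ‖x̃^{k-1} - x̃^{k-2}‖`, and the claim is the triangle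
inequality through `x^k` together with `(a + b)² ≤ 2a² + 2b²`.
-/

namespace Convex

variable {E : Type*} [NormedAddCommGroup E] [InnerProductSpace ℝ E] {K : Set E}

theorem inner_sub_nonpos_of_forall_norm_sub_le (hK : Convex ℝ K) {z p : E} (hp : p ∈ K)
    (hmin : ∀ y ∈ K, ‖p - z‖ ≤ ‖y - z‖) : ∀ w ∈ K, ⟪z - p, w - p⟫ ≤ 0 := by
  have hinf : IsMinOn (fun w => ‖z - w‖) K p := fun y hy => by
    simpa only [Set.mem_ofPred_eq, norm_sub_rev z] using hmin y hy
  exact (norm_eq_iInf_iff_real_inner_le_zero hK hp).1 (hinf.iInf_eq hp).symm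

theorem norm_sub_le_of_forall_norm_sub_le (hK : Convex ℝ K) {z₁ z₂ p₁ p₂ : E}
    (hp₁ : p₁ ∈ K) (hmin₁ : ∀ y ∈ K, ‖p₁ - z₁‖ ≤ ‖y - z₁‖)
    (hp₂ : p₂ ∈ K) (hmin₂ : ∀ y ∈ K, ‖p₂ - z₂‖ ≤ ‖y - z₂‖) :
    ‖p₁ - p₂‖ ≤ ‖z₁ - z₂‖ := by
  have h₁ := hK.inner_sub_nonpos_of_forall_norm_sub_le hp₁ hmin₁ p₂ hp₂
  have h₂ := hK.inner_sub_nonpos_of_forall_norm_sub_le hp₂ hmin₂ p₁ hp₁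
  have key : ‖p₁ - p₂‖ ^ 2 ≤ ‖z₁ - z₂‖ * ‖p₁ - p₂‖ :=
    calc ‖p₁ - p₂‖ ^ 2 ≤ ⟪z₁ - z₂, p₁ - p₂⟫ := by
          rw [← real_inner_self_eq_norm_sq]
          have : ⟪z₁ - z₂, p₁ - p₂⟫ - ⟪p₁ - p₂, p₁ - p₂⟫
              = -⟪z₁ - p₁, p₂ - p₁⟫ - ⟪z₂ - p₂, p₁ - p₂⟫ := by
            simp only [inner_sub_left, inner_sub_right]; ring
          linarith
      _ ≤ ‖z₁ - z₂‖ * ‖p₁ - p₂‖ := real_inner_le_norm _ _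
  rcases (norm_nonneg (p₁ - p₂)).eq_or_lt with h | h
  · rw [← h]; exact norm_nonneg _
  · nlinarith

end Convex

theorem proj_peg_lemma6_general (d : ℕ) (X : Set (EuclideanSpace ℝ (Fin d)))
    (hXconv : Convex ℝ X)
    (F : EuclideanSpace ℝ (Fin d) → EuclideanSpace ℝ (Fin d)) (L γ : ℝ)
    (hLip : ∀ x y, ‖F x - F y‖ ≤ L * ‖x - y‖)
    (xkm xk xtmm xtm xt : EuclideanSpace ℝ (Fin d))
    (hxtm : IsProjOn X (xkm - γ • F xtmm) xtm)
    (hxk : IsProjOn X (xkm - γ • F xtm) xk) :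
    ‖xt - xtm‖ ^ 2 ≤
      4 * ‖xt - xk‖ ^ 2 + 4 * γ ^ 2 * L ^ 2 * ‖xtm - xtmm‖ ^ 2 - ‖xt - xtm‖ ^ 2 := by
  have hstep : ‖xk - xtm‖ ≤ |γ| * (L * ‖xtm - xtmm‖) :=
    calc ‖xk - xtm‖ ≤ ‖(xkm - γ • F xtm) - (xkm - γ • F xtmm)‖ :=
          hXconv.norm_sub_le_of_forall_norm_sub_le hxk.1 hxk.2 hxtm.1 hxtm.2
      _ = |γ| * ‖F xtmm - F xtm‖ := by
          rw [sub_sub_sub_cancel_left, ← smul_sub, norm_smul, Real.norm_eq_abs]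
      _ ≤ |γ| * (L * ‖xtm - xtmm‖) := by
          gcongr
          rw [norm_sub_rev xtm]
          exact hLip xtmm xtm
  have hstep_sq : ‖xk - xtm‖ ^ 2 ≤ γ ^ 2 * L ^ 2 * ‖xtm - xtmm‖ ^ 2 := by
    calc ‖xk - xtm‖ ^ 2 ≤ (|γ| * (L * ‖xtm - xtmm‖)) ^ 2 :=
          pow_le_pow_left₀ (norm_nonneg _) hstep 2
      _ = γ ^ 2 * L ^ 2 * ‖xtm - xtmm‖ ^ 2 := by rw [mul_pow, sq_abs]; ring
  have htri : ‖xt - xtm‖ ^ 2 ≤ 2 * (‖xt - xk‖ ^ 2 + ‖xk - xtm‖ ^ 2) :=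
    (pow_le_pow_left₀ (norm_nonneg _) (norm_sub_le_norm_sub_add_norm_sub xt xk xtm) 2).trans
      add_sq_le
  linarith

theorem proj_peg_lemma6 (d : ℕ) (X : Set (EuclideanSpace ℝ (Fin d)))
    (hX : X.Nonempty) (hXc : IsClosed X) (hXconv : Convex ℝ X)
    (F : EuclideanSpace ℝ (Fin d) → EuclideanSpace ℝ (Fin d)) (L γ : ℝ)
    (hLip : ∀ x y, ‖F x - F y‖ ≤ L * ‖x - y‖)
    (hγ : 0 < γ)
    (xkm xk xtmm xtm xt : EuclideanSpace ℝ (Fin d))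
    (hxtm : IsProjOn X (xkm - γ • F xtmm) xtm)
    (hxk : IsProjOn X (xkm - γ • F xtm) xk)
    (hxt : IsProjOn X (xk - γ • F xtm) xt) :
    ‖xt - xtm‖ ^ 2 ≤
      4 * ‖xt - xk‖ ^ 2 + 4 * γ ^ 2 * L ^ 2 * ‖xtm - xtmm‖ ^ 2 - ‖xt - xtm‖ ^ 2 :=
  proj_peg_lemma6_general d X hXconv F L γ hLip xkm xk xtmm xtm xt hxtm hxk
end

section
/- Let X ⊆ R^d closed convex, F monotone and L-Lipschitz, x* a solution of the VI on X, and consider projected PEG iterates with x^1 = proj_X[x^0 - γF(x^0)], x̃^1 = proj_X[x^1 - γF(x^0)], x^2 = proj_X[x^1 - γF(x̃^1)]. Then ‖x^2 - x*‖² ≤ 2(1 + 3γ²L² + 4γ⁴L⁴)‖x^0 - x*‖². -/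
open scoped RealInnerProductSpace

/-! Every projected step `p = proj_X (x - γ v)` is compared with the fixed point
`xs = proj_X (xs - γ F xs)`, giving `‖p - xs‖ ≤ ‖(x - xs) - γ (v - F xs)‖`. For `x¹` the cross
term of the square is nonpositive by monotonicity, so `‖x¹ - xs‖² ≤ (1 + γ²L²)‖x⁰ - xs‖²`; for
`x̃¹` and `x²` the bound `‖a - γ b‖² ≤ 2‖a‖² + 2γ²‖b‖²` and Lipschitz continuity give
`‖x̃¹ - xs‖² ≤ 2‖x¹ - xs‖² + 2γ²L²‖x⁰ - xs‖²` and `‖x² - xs‖² ≤ 2‖x¹ - xs‖² + 2γ²L²‖x̃¹ - xs‖²`.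
Chaining the three estimates gives the constant `2(1 + 3γ²L² + 4γ⁴L⁴)`. -/

theorem norm_sub_smul_sq_le_of_inner_nonneg {E : Type*} [NormedAddCommGroup E]
    [InnerProductSpace ℝ E] {u v : E} {γ : ℝ} (hγ : 0 ≤ γ)
    (huv : 0 ≤ ⟪v, u⟫) : ‖u - γ • v‖ ^ 2 ≤ ‖u‖ ^ 2 + γ ^ 2 * ‖v‖ ^ 2 := by
  rw [norm_sub_sq_real, real_inner_smul_right, norm_smul, mul_pow, Real.norm_eq_abs, sq_abs,
    real_inner_comm]
  nlinarith [mul_nonneg hγ huv]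

theorem norm_sub_smul_sq_le {E : Type*} [SeminormedAddCommGroup E] [NormedSpace ℝ E]
    (u v : E) (γ : ℝ) : ‖u - γ • v‖ ^ 2 ≤ 2 * ‖u‖ ^ 2 + 2 * γ ^ 2 * ‖v‖ ^ 2 := by
  have h : ‖u - γ • v‖ ≤ ‖u‖ + |γ| * ‖v‖ := by
    simpa only [norm_smul, Real.norm_eq_abs] using norm_sub_le u (γ • v)
  calc ‖u - γ • v‖ ^ 2 ≤ (‖u‖ + |γ| * ‖v‖) ^ 2 := by gcongr
    _ ≤ 2 * (‖u‖ ^ 2 + (|γ| * ‖v‖) ^ 2) := add_sq_le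
    _ = 2 * ‖u‖ ^ 2 + 2 * γ ^ 2 * ‖v‖ ^ 2 := by rw [mul_pow, sq_abs]; ring

namespace IsProjOn

variable {d : ℕ} {X : Set (EuclideanSpace ℝ (Fin d))} {z p w : EuclideanSpace ℝ (Fin d)}

theorem inner_sub_le_zero (hX : Convex ℝ X) (hp : IsProjOn X z p) (hw : w ∈ X) :
    ⟪z - p, w - p⟫ ≤ 0 := by
  have : Nonempty X := ⟨⟨p, hp.1⟩⟩
  have hinf : ‖z - p‖ = ⨅ y : X, ‖z - y‖ :=
    le_antisymm (le_ciInf fun y => by rw [norm_sub_rev z, norm_sub_rev z]; exact hp.2 y y.2)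
      (ciInf_le ⟨0, by rintro _ ⟨y, rfl⟩; exact norm_nonneg _⟩ (⟨p, hp.1⟩ : X))
  exact (norm_eq_iInf_iff_real_inner_le_zero hX hp.1).1 hinf w hw

/-- `hg` is the instance `y = p` of `w = proj_X (w - g)`, i.e. of `0 ≤ ⟪g, y - w⟫` on `X`. -/
theorem norm_sub_le_of_inner_nonneg {g : EuclideanSpace ℝ (Fin d)} (hX : Convex ℝ X)
    (hp : IsProjOn X z p) (hw : w ∈ X) (hg : 0 ≤ ⟪g, p - w⟫) : ‖p - w‖ ≤ ‖z - (w - g)‖ := by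
  have hvi : 0 ≤ ⟪z - p, p - w⟫ := by
    rw [← neg_sub w p, inner_neg_right, neg_nonneg]
    exact hp.inner_sub_le_zero hX hw
  have key : ‖p - w‖ ^ 2 ≤ ⟪z - (w - g), p - w⟫ := by
    have expand : ⟪z - (w - g), p - w⟫ = ⟪p - w, p - w⟫ + ⟪z - p, p - w⟫ + ⟪g, p - w⟫ := by
      rw [← inner_add_left, ← inner_add_left]; congr 1; abel
    rw [expand, real_inner_self_eq_norm_sq]
    linarith
  have hcs := real_inner_le_norm (z - (w - g)) (p - w)
  nlinarith [norm_nonneg (p - w), norm_nonneg (z - (w - g))]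

theorem norm_sub_le_of_isVISolution {F : EuclideanSpace ℝ (Fin d) → EuclideanSpace ℝ (Fin d)}
    {γ : ℝ} {x v xs : EuclideanSpace ℝ (Fin d)} (hX : Convex ℝ X) (hγ : 0 ≤ γ)
    (hxsX : xs ∈ X) (hxs : ∀ x ∈ X, 0 ≤ ⟪F xs, x - xs⟫) (hp : IsProjOn X (x - γ • v) p) :
    ‖p - xs‖ ≤ ‖(x - xs) - γ • (v - F xs)‖ := by
  have h := hp.norm_sub_le_of_inner_nonneg (g := γ • F xs) hX hxsX
    (by rw [real_inner_smul_left]; exact mul_nonneg hγ (hxs p hp.1))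
  rwa [show x - γ • v - (xs - γ • F xs) = (x - xs) - γ • (v - F xs) by rw [smul_sub]; abel] at h

end IsProjOn

theorem proj_second_step_distance_general (d : ℕ) (X : Set (EuclideanSpace ℝ (Fin d)))
    (hXconv : Convex ℝ X)
    (F : EuclideanSpace ℝ (Fin d) → EuclideanSpace ℝ (Fin d)) (L γ : ℝ)
    (hmono : ∀ x y, 0 ≤ ⟪F x - F y, x - y⟫)
    (hLip : ∀ x y, ‖F x - F y‖ ≤ L * ‖x - y‖)
    (hγ : 0 < γ)
    (xs : EuclideanSpace ℝ (Fin d)) (hxsX : xs ∈ X)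
    (hxs : ∀ x ∈ X, 0 ≤ ⟪F xs, x - xs⟫)
    (x0 x1 xt1 x2 : EuclideanSpace ℝ (Fin d))
    (hx1 : IsProjOn X (x0 - γ • F x0) x1)
    (hxt1 : IsProjOn X (x1 - γ • F x0) xt1)
    (hx2 : IsProjOn X (x1 - γ • F xt1) x2) :
    ‖x2 - xs‖ ^ 2 ≤
      2 * (1 + 3 * γ ^ 2 * L ^ 2 + 4 * γ ^ 4 * L ^ 4) * ‖x0 - xs‖ ^ 2 := by
  have step {x v p} (hp : IsProjOn X (x - γ • v) p) :
      ‖p - xs‖ ^ 2 ≤ ‖(x - xs) - γ • (v - F xs)‖ ^ 2 :=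
    pow_le_pow_left₀ (norm_nonneg _) (hp.norm_sub_le_of_isVISolution hXconv hγ.le hxsX hxs) 2
  have lip y : ‖F y - F xs‖ ^ 2 ≤ L ^ 2 * ‖y - xs‖ ^ 2 := by
    rw [← mul_pow]; exact pow_le_pow_left₀ (norm_nonneg _) (hLip y xs) 2
  have h1 : ‖x1 - xs‖ ^ 2 ≤ (1 + γ ^ 2 * L ^ 2) * ‖x0 - xs‖ ^ 2 := by
    have := norm_sub_smul_sq_le_of_inner_nonneg hγ.le (hmono x0 xs)
    nlinarith [step hx1, lip x0, sq_nonneg γ]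
  have ht1 : ‖xt1 - xs‖ ^ 2 ≤ 2 * ‖x1 - xs‖ ^ 2 + 2 * γ ^ 2 * L ^ 2 * ‖x0 - xs‖ ^ 2 := by
    nlinarith [step hxt1, norm_sub_smul_sq_le (x1 - xs) (F x0 - F xs) γ, lip x0, sq_nonneg γ]
  have h2 : ‖x2 - xs‖ ^ 2 ≤ 2 * ‖x1 - xs‖ ^ 2 + 2 * γ ^ 2 * L ^ 2 * ‖xt1 - xs‖ ^ 2 := by
    nlinarith [step hx2, norm_sub_smul_sq_le (x1 - xs) (F xt1 - F xs) γ, lip xt1, sq_nonneg γ]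
  have hg : 0 ≤ γ ^ 2 * L ^ 2 := by positivity
  nlinarith [mul_le_mul_of_nonneg_left ht1 hg, mul_le_mul_of_nonneg_left h1 hg]

theorem proj_second_step_distance (d : ℕ) (X : Set (EuclideanSpace ℝ (Fin d)))
    (hX : X.Nonempty) (hXc : IsClosed X) (hXconv : Convex ℝ X)
    (F : EuclideanSpace ℝ (Fin d) → EuclideanSpace ℝ (Fin d)) (L γ : ℝ)
    (hmono : ∀ x y, 0 ≤ ⟪F x - F y, x - y⟫)
    (hLip : ∀ x y, ‖F x - F y‖ ≤ L * ‖x - y‖)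
    (hγ : 0 < γ)
    (xs : EuclideanSpace ℝ (Fin d)) (hxsX : xs ∈ X)
    (hxs : ∀ x ∈ X, 0 ≤ ⟪F xs, x - xs⟫)
    (x0 x1 xt1 x2 : EuclideanSpace ℝ (Fin d)) (hx0 : x0 ∈ X)
    (hx1 : IsProjOn X (x0 - γ • F x0) x1)
    (hxt1 : IsProjOn X (x1 - γ • F x0) xt1)
    (hx2 : IsProjOn X (x1 - γ • F xt1) x2) :
    ‖x2 - xs‖ ^ 2 ≤
      2 * (1 + 3 * γ ^ 2 * L ^ 2 + 4 * γ ^ 4 * L ^ 4) * ‖x0 - xs‖ ^ 2 :=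
  proj_second_step_distance_general d X hXconv F L γ hmono hLip hγ xs hxsX hxs x0 x1 xt1 x2 hx1 hxt1
    hx2
end

section
/- Let X ⊆ R^d be closed convex, F monotone and L-Lipschitz, x* a solution to the VI on X, and let {x^k, x̃^k} be projected PEG iterates with γ ≤ 1/(4L). Define Φ_k = ‖x^k - x*‖² + (1/16)‖x̃^{k-1} - x̃^{k-2}‖² + ((3k + 32)/24)Ψ_k, where Ψ_k = ‖x^k - x^{k-1}‖² + ‖x^k - x^{k-1} - 2γ(F(x^k) - F(x̃^{k-1}))‖². Then Φ_{k+1} ≤ Φ_k for all k ≥ 2. -/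
/-!
Write `G = γ • F`: the iteration is then projected PEG with unit step for the monotone,
`1/4`-Lipschitz operator `G`. The difference `Φ_k - Φ_{k+1}` is affine in `k` with slope
`(Ψ_k - Ψ_{k+1}) / 8`, so it suffices to show that `Ψ` is nonincreasing and that the difference is
nonnegative at `k = 2`. Both are quadratic inequalities in the Gram matrix of the iterates and of
their images under `G`: each is a nonnegative combination of the obtuse-angle inequalities
`⟪z - p, y - p⟫ ≤ 0` of the projections, of monotonicity and Lipschitz inequalities, and of squares
(a performance-estimation certificate).
-/

open scoped RealInnerProductSpace

section PEG

variable {E : Type*} [NormedAddCommGroup E] [InnerProductSpace ℝ E]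

/-- The variational characterization of `p` as the projection of `z` onto a convex set `X`. -/
def IsProjIneq (X : Set E) (z p : E) : Prop :=
  p ∈ X ∧ ∀ y ∈ X, ⟪z - p, y - p⟫ ≤ 0

theorem IsProjOn.isProjIneq {d : ℕ} {X : Set (EuclideanSpace ℝ (Fin d))}
    {z p : EuclideanSpace ℝ (Fin d)} (hX : Convex ℝ X) (h : IsProjOn X z p) :
    IsProjIneq X z p := by
  have : Nonempty X := ⟨⟨p, h.1⟩⟩
  have hinf : ‖z - p‖ = ⨅ w : X, ‖z - w‖ := by
    refine le_antisymm (le_ciInf fun w => ?_) ?_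
    · rw [norm_sub_rev z p, norm_sub_rev z (w : EuclideanSpace ℝ (Fin d))]
      exact h.2 w w.2
    · have hbdd : BddBelow (Set.range fun w : X => ‖z - w‖) :=
        ⟨0, by rintro _ ⟨w, rfl⟩; exact norm_nonneg _⟩
      exact ciInf_le hbdd ⟨p, h.1⟩
  exact ⟨h.1, (norm_eq_iInf_iff_real_inner_le_zero hX h.1).1 hinf⟩

/-- `pegPsi G x' x xt'` is `Ψ_k` for `G = γ • F`, `x' = x^{k-1}`, `x = x^k`, `xt' = x̃^{k-1}`. -/
def pegPsi (G : E → E) (x' x xt' : E) : ℝ :=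
  ‖x - x'‖ ^ 2 + ‖x - x' - (2 : ℝ) • (G x - G xt')‖ ^ 2

variable {X : Set E} {G : E → E}

theorem pegPsi_step_le (hmono : ∀ u v, 0 ≤ ⟪G u - G v, u - v⟫)
    (hLip : ∀ u v, 2 * ‖G u - G v‖ ≤ ‖u - v‖) {a b c q r : E}
    (hb : IsProjIneq X (a - G q) b) (hr : IsProjIneq X (b - G q) r)
    (hc : IsProjIneq X (b - G r) c) :
    pegPsi G b c r ≤ pegPsi G a b q := by
  have := hb.2 c hc.1
  have := hb.2 r hr.1
  have := hr.2 c hc.1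
  have := hc.2 b hb.1
  have := hmono b c
  have : 4 * ‖G c - G r‖ ^ 2 ≤ ‖c - r‖ ^ 2 := by nlinarith [hLip c r, norm_nonneg (G c - G r)]
  have := sq_nonneg ‖a - (2 : ℝ) • b + c - (2 : ℝ) • G q + (2 : ℝ) • G b‖
  have := sq_nonneg ‖a - (2 : ℝ) • b + r‖
  unfold pegPsi
  simp only [← real_inner_self_eq_norm_sq, inner_add_left, inner_add_right, inner_sub_left,
    inner_sub_right, real_inner_smul_right, real_inner_comm] at *
  linarith

theorem peg_lyapunov_decrease_at_two (hmono : ∀ u v, 0 ≤ ⟪G u - G v, u - v⟫)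
    (hLip : ∀ u v, 4 * ‖G u - G v‖ ≤ ‖u - v‖) {a b c p q r s : E}
    (hq : IsProjIneq X (a - G p) q) (hb : IsProjIneq X (a - G q) b)
    (hr : IsProjIneq X (b - G q) r) (hc : IsProjIneq X (b - G r) c)
    (hs : s ∈ X) (hsol : ∀ y ∈ X, 0 ≤ ⟪G s, y - s⟫) :
    ‖c - s‖ ^ 2 + 1 / 16 * ‖r - q‖ ^ 2 + 41 / 24 * pegPsi G b c r ≤
      ‖b - s‖ ^ 2 + 1 / 16 * ‖q - p‖ ^ 2 + 38 / 24 * pegPsi G a b q := by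
  have hL : ∀ u v, 16 * ‖G u - G v‖ ^ 2 ≤ ‖u - v‖ ^ 2 := fun u v => by
    nlinarith [hLip u v, norm_nonneg (G u - G v)]
  have := hq.2 b hb.1; have := hq.2 c hc.1; have := hq.2 r hr.1
  have := hb.2 c hc.1; have := hb.2 r hr.1; have := hr.2 c hc.1
  have := hc.2 b hb.1; have := hc.2 q hq.1; have := hc.2 r hr.1; have := hc.2 s hs
  have := hmono b c; have := hmono c q; have := hmono c r; have := hmono r s
  have := hsol r hr.1
  have := hL b q; have := hL b r; have := hL c q; have := hL c r
  have := hL p q; have := hL p r; have := hL q r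
  -- An LDL factorization of what remains of the difference once the right multiples of the
  -- facts above are subtracted; `linarith` recovers those multipliers.
  have := sq_nonneg ‖(304 : ℝ) • a - (496 : ℝ) • b + (201 : ℝ) • c - (72 : ℝ) • q + (63 : ℝ) • r
    - (304 : ℝ) • G q + (304 : ℝ) • G b‖
  have := sq_nonneg ‖-(91 : ℝ) • b + (7 : ℝ) • c + (66 : ℝ) • q + (18 : ℝ) • r
    - (84 : ℝ) • G q - (256 : ℝ) • G r + (340 : ℝ) • G c‖
  have := sq_nonneg ‖(5 : ℝ) • p - (6 : ℝ) • q + r‖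
  have := sq_nonneg ‖-(22 : ℝ) • b - c + (24 : ℝ) • q - r
    + (22 : ℝ) • G p - (20 : ℝ) • G q - (2 : ℝ) • G r‖
  have := sq_nonneg ‖-(45 : ℝ) • b + (36 : ℝ) • c + (72 : ℝ) • q - (63 : ℝ) • r
    - (334 : ℝ) • G q - (78 : ℝ) • G r + (412 : ℝ) • G b‖
  have := sq_nonneg ‖-(3400397 : ℝ) • b - (4546456 : ℝ) • c + (136712 : ℝ) • q
    + (7810141 : ℝ) • r + (9626302 : ℝ) • (G q - G r)‖
  have := sq_nonneg ‖(4390353784 : ℝ) • b + (4466808518 : ℝ) • c - (1182862263 : ℝ) • q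
    - (7674300039 : ℝ) • r‖
  have := sq_nonneg ‖(1577517461504 : ℝ) • c - (573738210789 : ℝ) • q - (1003779250715 : ℝ) • r‖
  have := sq_nonneg ‖q - r‖
  unfold pegPsi
  simp only [← real_inner_self_eq_norm_sq, inner_add_left, inner_add_right, inner_sub_left,
    inner_sub_right, real_inner_smul_right, real_inner_comm] at *
  linarith

theorem peg_lyapunov_decrease_step (hmono : ∀ u v, 0 ≤ ⟪G u - G v, u - v⟫)
    (hLip : ∀ u v, 4 * ‖G u - G v‖ ≤ ‖u - v‖) {a b c p q r s : E}
    (hq : IsProjIneq X (a - G p) q) (hb : IsProjIneq X (a - G q) b)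
    (hr : IsProjIneq X (b - G q) r) (hc : IsProjIneq X (b - G r) c)
    (hs : s ∈ X) (hsol : ∀ y ∈ X, 0 ≤ ⟪G s, y - s⟫) {k : ℝ} (hk : 2 ≤ k) :
    ‖c - s‖ ^ 2 + 1 / 16 * ‖r - q‖ ^ 2 + (3 * (k + 1) + 32) / 24 * pegPsi G b c r ≤
      ‖b - s‖ ^ 2 + 1 / 16 * ‖q - p‖ ^ 2 + (3 * k + 32) / 24 * pegPsi G a b q := by
  have hΨ := pegPsi_step_le hmono (fun u v => by linarith [hLip u v, norm_nonneg (G u - G v)])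
    hb hr hc
  have hbase := peg_lyapunov_decrease_at_two hmono hLip hq hb hr hc hs hsol
  nlinarith [mul_nonneg (sub_nonneg.2 hk) (sub_nonneg.2 hΨ)]

end PEG

theorem proj_peg_lyapunov_decrease_general (d : ℕ) (X : Set (EuclideanSpace ℝ (Fin d)))
    (hXconv : Convex ℝ X)
    (F : EuclideanSpace ℝ (Fin d) → EuclideanSpace ℝ (Fin d)) (L γ : ℝ)
    (hL : 0 < L)
    (hmono : ∀ x y, 0 ≤ ⟪F x - F y, x - y⟫)
    (hLip : ∀ x y, ‖F x - F y‖ ≤ L * ‖x - y‖)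
    (hγpos : 0 < γ) (hγ : γ ≤ 1 / (4 * L))
    (xs : EuclideanSpace ℝ (Fin d)) (hxsX : xs ∈ X)
    (hxs : ∀ x ∈ X, 0 ≤ ⟪F xs, x - xs⟫)
    (x xt : ℕ → EuclideanSpace ℝ (Fin d))
    (hxt : ∀ k, 1 ≤ k → IsProjOn X (x k - γ • F (xt (k - 1))) (xt k))
    (hx : ∀ k, 1 ≤ k → IsProjOn X (x k - γ • F (xt k)) (x (k + 1))) :
    ∀ k : ℕ, 2 ≤ k →
      ‖x (k + 1) - xs‖ ^ 2 + (1 / 16) * ‖xt k - xt (k - 1)‖ ^ 2 +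
          ((3 * ((k : ℝ) + 1) + 32) / 24) *
            (‖x (k + 1) - x k‖ ^ 2 +
              ‖x (k + 1) - x k - (2 * γ) • (F (x (k + 1)) - F (xt k))‖ ^ 2) ≤
        ‖x k - xs‖ ^ 2 + (1 / 16) * ‖xt (k - 1) - xt (k - 2)‖ ^ 2 +
          ((3 * (k : ℝ) + 32) / 24) *
            (‖x k - x (k - 1)‖ ^ 2 +
              ‖x k - x (k - 1) - (2 * γ) • (F (x k) - F (xt (k - 1)))‖ ^ 2) := by
  intro k hk
  obtain ⟨j, rfl⟩ := Nat.exists_eq_add_of_le' hk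
  have hγL : γ * (4 * L) ≤ 1 := (le_div_iff₀ (by positivity)).1 hγ
  have hGmono : ∀ u v, 0 ≤ ⟪γ • F u - γ • F v, u - v⟫ := fun u v => by
    rw [← smul_sub, real_inner_smul_left]
    exact mul_nonneg hγpos.le (hmono u v)
  have hGLip : ∀ u v, 4 * ‖γ • F u - γ • F v‖ ≤ ‖u - v‖ := fun u v => by
    rw [← smul_sub, norm_smul, Real.norm_of_nonneg hγpos.le]
    nlinarith [hLip u v, norm_nonneg (F u - F v), norm_nonneg (u - v)]
  have hGsol : ∀ y ∈ X, 0 ≤ ⟪γ • F xs, y - xs⟫ := fun y hy => by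
    rw [real_inner_smul_left]
    exact mul_nonneg hγpos.le (hxs y hy)
  have hq : IsProjOn X (x (j + 1) - γ • F (xt j)) (xt (j + 1)) := hxt (j + 1) le_add_self
  have hb : IsProjOn X (x (j + 1) - γ • F (xt (j + 1))) (x (j + 2)) := hx (j + 1) le_add_self
  have hr : IsProjOn X (x (j + 2) - γ • F (xt (j + 1))) (xt (j + 2)) := hxt (j + 2) le_add_self
  have hc : IsProjOn X (x (j + 2) - γ • F (xt (j + 2))) (x (j + 2 + 1)) := hx (j + 2) le_add_self
  have hstep := peg_lyapunov_decrease_step (G := fun u => γ • F u) hGmono hGLip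
    (hq.isProjIneq hXconv) (hb.isProjIneq hXconv) (hr.isProjIneq hXconv) (hc.isProjIneq hXconv)
    hxsX hGsol (k := ((j + 2 : ℕ) : ℝ)) (by push_cast; linarith)
  rw [show j + 2 - 1 = j + 1 from rfl, show j + 2 - 2 = j from rfl]
  simpa only [pegPsi, mul_smul, smul_sub] using hstep

theorem proj_peg_lyapunov_decrease (d : ℕ) (X : Set (EuclideanSpace ℝ (Fin d)))
    (hX : X.Nonempty) (hXc : IsClosed X) (hXconv : Convex ℝ X)
    (F : EuclideanSpace ℝ (Fin d) → EuclideanSpace ℝ (Fin d)) (L γ : ℝ)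
    (hL : 0 < L)
    (hmono : ∀ x y, 0 ≤ ⟪F x - F y, x - y⟫)
    (hLip : ∀ x y, ‖F x - F y‖ ≤ L * ‖x - y‖)
    (hγpos : 0 < γ) (hγ : γ ≤ 1 / (4 * L))
    (xs : EuclideanSpace ℝ (Fin d)) (hxsX : xs ∈ X)
    (hxs : ∀ x ∈ X, 0 ≤ ⟪F xs, x - xs⟫)
    (x xt : ℕ → EuclideanSpace ℝ (Fin d))
    (hx0 : x 0 ∈ X) (hxt0 : xt 0 = x 0)
    (hx1 : IsProjOn X (x 0 - γ • F (x 0)) (x 1))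
    (hxt : ∀ k, 1 ≤ k → IsProjOn X (x k - γ • F (xt (k - 1))) (xt k))
    (hx : ∀ k, 1 ≤ k → IsProjOn X (x k - γ • F (xt k)) (x (k + 1))) :
    ∀ k : ℕ, 2 ≤ k →
      ‖x (k + 1) - xs‖ ^ 2 + (1 / 16) * ‖xt k - xt (k - 1)‖ ^ 2 +
          ((3 * ((k : ℝ) + 1) + 32) / 24) *
            (‖x (k + 1) - x k‖ ^ 2 +
              ‖x (k + 1) - x k - (2 * γ) • (F (x (k + 1)) - F (xt k))‖ ^ 2) ≤
        ‖x k - xs‖ ^ 2 + (1 / 16) * ‖xt (k - 1) - xt (k - 2)‖ ^ 2 +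
          ((3 * (k : ℝ) + 32) / 24) *
            (‖x k - x (k - 1)‖ ^ 2 +
              ‖x k - x (k - 1) - (2 * γ) • (F (x k) - F (xt (k - 1)))‖ ^ 2) :=
  proj_peg_lyapunov_decrease_general d X hXconv F L γ hL hmono hLip hγpos hγ xs hxsX hxs x xt hxt hx
end
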